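/- For all integers n ≥ 1 and m ≥ 3, the connected size Ramsey number r̂_c(nK₂, Pₘ) is at most n(m+2)/2 − 1 if n is even, and at most (n+1)(m+2)/2 − 3 if n is odd. -/

import Mathlib

open SimpleGraph

/-- `G` contains a copy of `H`, i.e. there is an injective graph homomorphism from `H` to `G`. -/
def ContainsCopy {V W : Type*} (G : SimpleGraph V) (H : SimpleGraph W) : Prop :=
  ∃ f : H →g G, Function.Injective f

/-- `G` arrows `(G₁, G₂)`: for every red/blue colouring of the edges of `G`
(given by a subgraph `R ≤ G` of red edges, the blue edges being `G \ R`),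
there is a red copy of `G₁` or a blue copy of `G₂`. -/
def Arrows {V V₁ V₂ : Type*} (G : SimpleGraph V) (G₁ : SimpleGraph V₁) (G₂ : SimpleGraph V₂) :
    Prop :=
  ∀ R : SimpleGraph V, R ≤ G → ContainsCopy R G₁ ∨ ContainsCopy (G \ R) G₂

/-- The matching `nK₂` with `n` edges. -/
def Matching (n : ℕ) : SimpleGraph (Fin n × Fin 2) where
  Adj a b := a.1 = b.1 ∧ a.2 ≠ b.2
  symm := ⟨by intro a b h; exact ⟨h.1.symm, h.2.symm⟩⟩
  loopless := ⟨by intro a h; exact h.2 rfl⟩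

/-- `n` disjoint copies of the graph `H`. -/
def Copies (n : ℕ) {W : Type*} (H : SimpleGraph W) : SimpleGraph (Fin n × W) where
  Adj a b := a.1 = b.1 ∧ H.Adj a.2 b.2
  symm := ⟨by intro a b h; exact ⟨h.1.symm, h.2.symm⟩⟩
  loopless := ⟨by intro a h; exact H.loopless.irrefl _ h.2⟩

/-- Disjoint union of two graphs. -/
def DisjUnion {V W : Type*} (G : SimpleGraph V) (H : SimpleGraph W) : SimpleGraph (V ⊕ W) where
  Adj a b :=
    match a, b with
    | Sum.inl x, Sum.inl y => G.Adj x y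
    | Sum.inr x, Sum.inr y => H.Adj x y
    | _, _ => False
  symm := ⟨by
    rintro (x | x) (y | y) h
    · exact G.symm.symm _ _ h
    · exact h.elim
    · exact h.elim
    · exact H.symm.symm _ _ h⟩
  loopless := ⟨by
    rintro (x | x) h
    · exact G.loopless.irrefl _ h
    · exact H.loopless.irrefl _ h⟩

/-!
The witnesses are glued from two pieces: the cycle `C_{m+1}`, which arrows `(2K₂, P_m)`, and
the path `P_m`, which arrows `(K₂, P_m)`. In a red/blue colouring of the cycle, either two red
edges are disjoint, or all red edges pass through one vertex (pairwise meeting edges without a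
common vertex span a triangle), and deleting that vertex leaves a blue `P_m`. Arrowing into
matchings is additive under disjoint union, because red matchings in the two parts combine, and
extra edges never destroy arrowing. So `n / 2` cycles for even `n`, resp. `(n - 1) / 2` cycles and a
path for odd `n`, chained by bridges into a connected graph, give the bound.
-/

open Function

lemma ContainsCopy.of_injective_hom {V V' W : Type*} {G : SimpleGraph V} {G' : SimpleGraph V'}
    {F : SimpleGraph W} (h : ContainsCopy G F) (φ : G →g G') (hφ : Injective φ) :
    ContainsCopy G' F :=
  let ⟨f, hf⟩ := h
  ⟨φ.comp f, hφ.comp hf⟩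

lemma ContainsCopy.mono {V W : Type*} {G G' : SimpleGraph V} {F : SimpleGraph W}
    (h : ContainsCopy G F) (hle : G ≤ G') : ContainsCopy G' F :=
  h.of_injective_hom (Hom.ofLE hle) injective_id

section Matching

variable {V : Type*} {R : SimpleGraph V} {n : ℕ}

lemma containsCopy_matching_iff :
    ContainsCopy R (Matching n) ↔
      ∃ f : Fin n × Fin 2 → V, Injective f ∧ ∀ i, R.Adj (f (i, 0)) (f (i, 1)) := by
  refine ⟨fun ⟨φ, hφ⟩ => ⟨φ, hφ, fun i => φ.map_adj ⟨rfl, zero_ne_one⟩⟩, fun ⟨f, hf, hadj⟩ => ?_⟩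
  refine ⟨⟨f, ?_⟩, hf⟩
  rintro ⟨i, s⟩ ⟨j, t⟩ ⟨rfl : i = j, hst : s ≠ t⟩
  fin_cases s <;> fin_cases t
  exacts [absurd rfl hst, hadj i, (hadj i).symm, absurd rfl hst]

lemma containsCopy_matching_of_equiv {ι : Type*} (e : ι ≃ Fin n) {f : ι × Fin 2 → V}
    (hf : Injective f) (hadj : ∀ i, R.Adj (f (i, 0)) (f (i, 1))) :
    ContainsCopy R (Matching n) :=
  containsCopy_matching_iff.mpr
    ⟨f ∘ Prod.map e.symm id, hf.comp (e.symm.injective.prodMap injective_id),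
      fun i => hadj (e.symm i)⟩

lemma containsCopy_matching_two {a b c d : V} (hab : R.Adj a b) (hcd : R.Adj c d)
    (hac : a ≠ c) (had : a ≠ d) (hbc : b ≠ c) (hbd : b ≠ d) :
    ContainsCopy R (Matching 2) := by
  refine containsCopy_matching_iff.mpr ⟨fun p => ![![a, b], ![c, d]] p.1 p.2, ?_, ?_⟩
  · rintro ⟨i, s⟩ ⟨j, t⟩ h
    fin_cases i <;> fin_cases s <;> fin_cases j <;> fin_cases t <;>
      simp_all [hab.ne, hcd.ne, eq_comm]
  · intro i
    fin_cases i
    exacts [hab, hcd]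

lemma containsCopy_matching_one {a b : V} (hab : R.Adj a b) : ContainsCopy R (Matching 1) := by
  refine containsCopy_matching_iff.mpr ⟨fun p => ![a, b] p.2, ?_, fun _ => hab⟩
  rintro ⟨i, s⟩ ⟨j, t⟩ h
  obtain rfl := Subsingleton.elim i j
  fin_cases s <;> fin_cases t <;> simp_all [hab.ne, eq_comm]

lemma containsCopy_matching_add {W : Type*} {R : SimpleGraph (V ⊕ W)} {a b : ℕ}
    (hl : ContainsCopy (R.comap Sum.inl) (Matching a))
    (hr : ContainsCopy (R.comap Sum.inr) (Matching b)) :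
    ContainsCopy R (Matching (a + b)) := by
  obtain ⟨f, hf, hfadj⟩ := containsCopy_matching_iff.mp hl
  obtain ⟨g, hg, hgadj⟩ := containsCopy_matching_iff.mp hr
  refine containsCopy_matching_of_equiv finSumFinEquiv
    (f := Sum.map f g ∘ Equiv.sumProdDistrib _ _ _)
    ((hf.sumMap hg).comp (Equiv.injective _)) ?_
  rintro (i | j)
  exacts [hfadj i, hgadj j]

end Matching

section Arrows

variable {V V' V₁ V₂ : Type*} {G₁ : SimpleGraph V₁} {G₂ : SimpleGraph V₂}

lemma Arrows.mono {G G' : SimpleGraph V} (h : Arrows G G₁ G₂) (hle : G ≤ G') : Arrows G' G₁ G₂ := by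
  intro R hR
  refine (h (R ⊓ G) inf_le_right).imp (fun hred => hred.mono inf_le_left) fun hblue => ?_
  exact hblue.mono fun x y ⟨hG, hR⟩ => ⟨hle hG, fun h' => hR ⟨h', hG⟩⟩

lemma Arrows.comap {G : SimpleGraph V} {G' : SimpleGraph V'} (h : Arrows G G₁ G₂) (φ : G ↪g G')
    {R : SimpleGraph V'} (hR : R ≤ G') :
    ContainsCopy (R.comap φ) G₁ ∨ ContainsCopy (G' \ R) G₂ :=
  (h _ fun _ _ hxy => φ.map_adj_iff.mp (hR hxy)).imp_right fun hblue =>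
    hblue.of_injective_hom ⟨φ, fun ⟨hG, hR⟩ => ⟨φ.map_adj_iff.mpr hG, hR⟩⟩ φ.injective

lemma arrows_matching_one_self (F : SimpleGraph V) : Arrows F (Matching 1) F := by
  intro R _
  by_cases hred : ∃ a b, R.Adj a b
  · obtain ⟨a, b, hab⟩ := hred
    exact Or.inl (containsCopy_matching_one hab)
  · exact Or.inr ⟨⟨id, fun hab => ⟨hab, fun h => hred ⟨_, _, h⟩⟩⟩, injective_id⟩

lemma Arrows.sum_matching {W : Type*} {G : SimpleGraph V} {H : SimpleGraph W} {a b : ℕ}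
    (hG : Arrows G (Matching a) G₂) (hH : Arrows H (Matching b) G₂) :
    Arrows (G ⊕g H) (Matching (a + b)) G₂ := by
  intro R hR
  rcases hG.comap Embedding.sumInl hR with hl | hblue
  · rcases hH.comap Embedding.sumInr hR with hr | hblue
    · exact Or.inl (containsCopy_matching_add hl hr)
    · exact Or.inr hblue
  · exact Or.inr hblue

end Arrows

namespace SimpleGraph

open Fin.CommRing in
lemma cycleGraph_not_adj_sub_one_add_one {n : ℕ} (hn : 2 ≤ n) (a : Fin (n + 2)) :
    ¬(cycleGraph (n + 2)).Adj (a - 1) (a + 1) := by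
  have h3 : (3 : Fin (n + 2)) ≠ 0 := fun h => by
    have : n + 2 ∣ 3 := Fin.natCast_eq_zero.mp (by exact_mod_cast h)
    have := Nat.le_of_dvd (by norm_num) this
    omega
  rw [cycleGraph_adj]
  rintro (h | h)
  · exact h3 (by linear_combination -h)
  · exact one_ne_zero (by linear_combination h : (1 : Fin (n + 2)) = 0)

lemma cycleGraph_cliqueFree_three {n : ℕ} (hn : 4 ≤ n) : (cycleGraph n).CliqueFree 3 := by
  obtain ⟨n, rfl⟩ : ∃ k, n = k + 2 := ⟨n - 2, by omega⟩
  intro s hs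
  obtain ⟨a, b, c, hab, hac, hbc, rfl⟩ := is3Clique_iff.mp hs
  have hb : b ∈ ({a - 1, a + 1} : Set _) := cycleGraph_neighborSet ▸ hab
  have hc : c ∈ ({a - 1, a + 1} : Set _) := cycleGraph_neighborSet ▸ hac
  have := cycleGraph_not_adj_sub_one_add_one (by omega) a
  rcases hb with rfl | rfl <;> rcases hc with rfl | rfl
  · exact hbc.ne rfl
  · exact this hbc
  · exact this hbc.symm
  · exact hbc.ne rfl

open Fin.CommRing in
lemma exists_pathGraph_hom_cycleGraph_avoiding {m : ℕ} (c : Fin (m + 1)) :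
    ∃ f : pathGraph m →g cycleGraph (m + 1), Injective f ∧ ∀ i, f i ≠ c := by
  refine ⟨⟨fun i => i.castSucc + (c + 1), fun {i j} h => ?_⟩, ?_, fun i h => ?_⟩
  · rw [cycleGraph_eq_circulantGraph, circulantGraph_adj_translate, ← cycleGraph_eq_circulantGraph]
    exact pathGraph_le_cycleGraph (by simpa [pathGraph_adj] using h)
  · exact (add_left_injective _).comp (Fin.castSucc_injective m)
  · refine Fin.castSucc_ne_last i (add_right_cancel (b := 1) ?_)
    rw [Fin.last_add_one]
    change i.castSucc + (c + 1) = c at h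
    linear_combination h

lemma exists_forall_adj_eq_or_eq_of_pairwise_meet {V : Type*} [Nonempty V] {R : SimpleGraph V}
    (hR : R.CliqueFree 3)
    (hmeet : ∀ ⦃a b c d⦄, R.Adj a b → R.Adj c d → a = c ∨ a = d ∨ b = c ∨ b = d) :
    ∃ v, ∀ ⦃x y⦄, R.Adj x y → x = v ∨ y = v := by
  classical
  by_contra! hstar
  obtain ⟨u, v, huv, -, -⟩ := hstar (Classical.arbitrary V)
  obtain ⟨x, y, hxy, hxu, hyu⟩ := hstar u
  obtain ⟨w, hvw, hwu⟩ : ∃ w, R.Adj v w ∧ w ≠ u := by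
    rcases hmeet huv hxy with h | h | rfl | rfl
    exacts [absurd h.symm hxu, absurd h.symm hyu, ⟨y, hxy, hyu⟩, ⟨x, hxy.symm, hxu⟩]
  obtain ⟨p, q, hpq, hpv, hqv⟩ := hstar v
  -- `pq` avoids `v`, so it meets `uv` in `u` and `vw` in `w`
  have huw : R.Adj u w := by
    have := hmeet huv hpq
    have := hmeet hvw hpq
    grind [Adj.symm]
  exact hR {u, v, w} (is3Clique_triple_iff.mpr ⟨huv, huw, hvw⟩)

lemma ncard_edgeSet_le_of_subset_range {V α : Type*} [Finite α] {G : SimpleGraph V}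
    {f : α → Sym2 V} (h : G.edgeSet ⊆ Set.range f) : G.edgeSet.ncard ≤ Nat.card α :=
  (Set.ncard_le_ncard h (Set.finite_range f)).trans <|
    (Nat.card_coe_set_eq _).symm.le.trans (Finite.card_range_le f)

lemma ncard_edgeSet_cycleGraph_le (n : ℕ) : (cycleGraph n).edgeSet.ncard ≤ n := by
  obtain _ | _ | n := n
  · simp [cycleGraph_zero_eq_bot]
  · simp [cycleGraph_one_eq_bot]
  refine (ncard_edgeSet_le_of_subset_range (f := fun i : Fin (n + 2) => s(i, i + 1)) ?_).trans
    (Nat.card_fin _).le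
  intro e he
  induction e using Sym2.ind with | _ u v
  rw [mem_edgeSet, cycleGraph_adj] at he
  rcases he with h | h
  · exact ⟨v, by rw [sub_eq_iff_eq_add'.mp h, Sym2.eq_swap]⟩
  · exact ⟨u, by rw [sub_eq_iff_eq_add'.mp h]⟩

lemma ncard_edgeSet_pathGraph_le (n : ℕ) : (pathGraph (n + 1)).edgeSet.ncard ≤ n := by
  refine (ncard_edgeSet_le_of_subset_range (f := fun i : Fin n => s(i.castSucc, i.succ)) ?_).trans
    (Nat.card_fin _).le
  intro e he
  induction e using Sym2.ind with | _ u v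
  rw [mem_edgeSet, pathGraph_adj] at he
  rcases he with h | h
  · exact ⟨⟨u, by omega⟩, by simp [h]⟩
  · exact ⟨⟨v, by omega⟩, by simp [h, Sym2.eq_swap]⟩

variable {V W : Type*} [Finite V] [Finite W] (G : SimpleGraph V) (H : SimpleGraph W)

lemma ncard_edgeSet_sum : (G ⊕g H).edgeSet.ncard = G.edgeSet.ncard + H.edgeSet.ncard := by
  simp only [← Nat.card_coe_set_eq, Nat.card_congr edgeSetSumEquiv, Nat.card_sum]

lemma ncard_edgeSet_sum_sup_edge_le (v : V) (w : W) :
    ((G ⊕g H) ⊔ edge (Sum.inl v) (Sum.inr w)).edgeSet.ncard ≤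
      G.edgeSet.ncard + H.edgeSet.ncard + 1 := by
  rw [edgeSet_sup, ← ncard_edgeSet_sum]
  refine (Set.ncard_union_le _ _).trans (Nat.add_le_add_left ?_ _)
  exact (Set.ncard_le_ncard edgeSet_edge_subset (Set.finite_singleton _)).trans
    (Set.ncard_singleton _).le

end SimpleGraph

lemma cycleGraph_arrows_matching_two_pathGraph {m : ℕ} (hm : 3 ≤ m) :
    Arrows (cycleGraph (m + 1)) (Matching 2) (pathGraph m) := by
  intro R hR
  by_cases hmeet : ∀ ⦃a b c d⦄, R.Adj a b → R.Adj c d → a = c ∨ a = d ∨ b = c ∨ b = d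
  · obtain ⟨v, hv⟩ := exists_forall_adj_eq_or_eq_of_pairwise_meet
      ((cycleGraph_cliqueFree_three (by omega)).anti hR) hmeet
    obtain ⟨f, hf, hfv⟩ := exists_pathGraph_hom_cycleGraph_avoiding v
    exact Or.inr ⟨⟨f, fun hij => ⟨f.map_adj hij, fun hred => (hv hred).elim (hfv _) (hfv _)⟩⟩, hf⟩
  · push Not at hmeet
    obtain ⟨a, b, c, d, hab, hcd, hac, had, hbc, hbd⟩ := hmeet
    exact Or.inl (containsCopy_matching_two hab hcd hac had hbc hbd)

def ConnectedSizeRamseyLE {V₁ V₂ : Type*} (G₁ : SimpleGraph V₁) (G₂ : SimpleGraph V₂) (e : ℕ) :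
    Prop :=
  ∃ (V : Type) (G : SimpleGraph V), Finite V ∧ G.Connected ∧ Arrows G G₁ G₂ ∧ G.edgeSet.ncard ≤ e

namespace ConnectedSizeRamseyLE

variable {W : Type*} {F : SimpleGraph W} {a b e e₁ e₂ : ℕ}

lemma mono {V₁ : Type*} {G₁ : SimpleGraph V₁} (h : ConnectedSizeRamseyLE G₁ F e) {e' : ℕ}
    (he : e ≤ e') : ConnectedSizeRamseyLE G₁ F e' :=
  let ⟨V, G, hV, hG, hA, hE⟩ := h
  ⟨V, G, hV, hG, hA, hE.trans he⟩

lemma matching_add (h₁ : ConnectedSizeRamseyLE (Matching a) F e₁)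
    (h₂ : ConnectedSizeRamseyLE (Matching b) F e₂) :
    ConnectedSizeRamseyLE (Matching (a + b)) F (e₁ + e₂ + 1) := by
  obtain ⟨V₁, G₁, _, hG₁, hA₁, hE₁⟩ := h₁
  obtain ⟨V₂, G₂, _, hG₂, hA₂, hE₂⟩ := h₂
  obtain ⟨v⟩ := hG₁.nonempty
  obtain ⟨w⟩ := hG₂.nonempty
  refine ⟨V₁ ⊕ V₂, (G₁ ⊕g G₂) ⊔ edge (Sum.inl v) (Sum.inr w), inferInstance,
    hG₁.sum_sup_edge hG₂, (hA₁.sum_matching hA₂).mono le_sup_left, ?_⟩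
  have := ncard_edgeSet_sum_sup_edge_le G₁ G₂ v w
  omega

end ConnectedSizeRamseyLE

lemma connectedSizeRamseyLE_matching_one_pathGraph {m : ℕ} (hm : 1 ≤ m) :
    ConnectedSizeRamseyLE (Matching 1) (pathGraph m) (m - 1) := by
  obtain ⟨m, rfl⟩ : ∃ k, m = k + 1 := ⟨m - 1, by omega⟩
  exact ⟨_, _, inferInstance, pathGraph_connected m, arrows_matching_one_self _,
    ncard_edgeSet_pathGraph_le m⟩

lemma connectedSizeRamseyLE_matching_two_pathGraph {m : ℕ} (hm : 3 ≤ m) :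
    ConnectedSizeRamseyLE (Matching 2) (pathGraph m) (m + 1) :=
  ⟨_, _, inferInstance, cycleGraph_connected, cycleGraph_arrows_matching_two_pathGraph hm,
    ncard_edgeSet_cycleGraph_le _⟩

lemma connectedSizeRamseyLE_matching_even_pathGraph {m : ℕ} (hm : 3 ≤ m) (k : ℕ) :
    ConnectedSizeRamseyLE (Matching (2 * k + 2)) (pathGraph m) (k * (m + 2) + (m + 1)) := by
  induction k with
  | zero => simpa using connectedSizeRamseyLE_matching_two_pathGraph hm
  | succ k ih =>
    rw [show 2 * (k + 1) + 2 = 2 * k + 2 + 2 by ring]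
    exact (ih.matching_add (connectedSizeRamseyLE_matching_two_pathGraph hm)).mono
      (le_of_eq (by ring))

/-- For all integers `n ≥ 1` and `m ≥ 3`, the connected size Ramsey number
`r̂_c(nK₂, Pₘ)` is at most `n(m+2)/2 − 1` if `n` is even, and at most `(n+1)(m+2)/2 − 3` if `n`
is odd. -/
theorem connected_size_ramsey_matching_path_upper (n m : ℕ) (hn : 1 ≤ n) (hm : 3 ≤ m) :
    ∃ (V : Type) (G : SimpleGraph V), Finite V ∧ G.Connected ∧
      Arrows G (Matching n) (pathGraph m) ∧
      G.edgeSet.ncard ≤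
        if Even n then n * (m + 2) / 2 - 1 else (n + 1) * (m + 2) / 2 - 3 := by
  have hpath := connectedSizeRamseyLE_matching_one_pathGraph (by omega : 1 ≤ m)
  obtain ⟨k, rfl | rfl⟩ : ∃ k, n = 2 * k + 2 ∨ n = 2 * k + 1 := ⟨(n - 1) / 2, by omega⟩
  · refine (connectedSizeRamseyLE_matching_even_pathGraph hm k).mono ?_
    rw [if_pos ⟨k + 1, by ring⟩, show (2 * k + 2) * (m + 2) = 2 * (k * (m + 2) + m + 2) by ring]
    omega
  · rw [if_neg (Nat.not_even_iff_odd.mpr (odd_two_mul_add_one k))]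
    obtain _ | k := k
    · exact hpath.mono (by omega)
    · refine ((connectedSizeRamseyLE_matching_even_pathGraph hm k).matching_add hpath).mono ?_
      rw [show (2 * (k + 1) + 1 + 1) * (m + 2) = 2 * (k * (m + 2) + 2 * m + 4) by ring]
      omega
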